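/- Let d ∈ ℕ. If H is a 3-uniform hypergraph on n > 54(d+1) vertices and δ₁(H) > C(n-1,2) − C(n-d,2) (where C(a,b) denotes the binomial coefficient), then H contains a matching of size at least d. -/

import Mathlib

/-!
Take a maximum matching `M` with `|M| < d` and call a vertex `w` strong if the pairs of
`M`-uncovered vertices forming an edge with `w` contain four disjoint ones. Pick one strong
vertex in every `M`-edge that has one (the set `X`); the vertices of the remaining `M`-edges
(the set `Y`) are not strong, so each of their links has a vertex cover of size at most 6.
Fix an uncovered vertex `v` outside all these covers. If an edge `{v, a, b}` misses `X`, then one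
of `a`, `b` lies in `Y` and the other lies in its cover or is covered by `M`: otherwise the (at
most two) `M`-edges through `a` and `b` can be traded for `{v, a, b}` plus one new edge through
the strong vertex of each of them, contradicting maximality. So at most `|Y| (6 + 3|M|)` edges
at `v` miss `X`, and `3|X| + |Y| ≤ 3|M| < 3d` leaves `deg v ≤ C(n-1,2) - C(n-d,2)`.
-/

open Finset

theorem Nat.choose_two_add_mul_le (b j : ℕ) : b.choose 2 + j * b ≤ (b + j).choose 2 := by
  induction j with
  | zero => simp
  | succ j ih =>
    have h : (b + j + 1).choose 2 = b + j + (b + j).choose 2 := by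
      simpa using Nat.choose_succ_succ' (b + j) 1
    rw [← add_assoc, h, Nat.succ_mul]
    omega

section Matching

variable {α : Type*}

def IsMatching (H N : Finset (Finset α)) : Prop :=
  N ⊆ H ∧ (N : Set (Finset α)).PairwiseDisjoint id

def IsMaximumMatching (H M : Finset (Finset α)) : Prop :=
  IsMatching H M ∧ ∀ N, IsMatching H N → N.card ≤ M.card

theorem exists_isMaximumMatching (H : Finset (Finset α)) : ∃ M, IsMaximumMatching H M := by
  classical
  obtain ⟨M, hM, hmax⟩ :=
    (H.powerset.filter (IsMatching H)).exists_max_image card ⟨∅, by simp [IsMatching]⟩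
  exact ⟨M, (mem_filter.1 hM).2,
    fun N hN => hmax N (mem_filter.2 ⟨mem_powerset.2 hN.1, hN⟩)⟩

variable [DecidableEq α]

theorem exists_disjoint_of_pairwiseDisjoint {F : Finset (Finset α)}
    (hF : (F : Set (Finset α)).PairwiseDisjoint id) {B : Finset α} (hB : B.card < F.card) :
    ∃ p ∈ F, Disjoint p B := by
  by_contra! h
  refine hB.not_ge (card_le_card_of_forall_subsingleton (fun p x => x ∈ p)
    (fun p hp => ?_) (fun x _ p hp q hq => hF.elim_finset hp.1 hq.1 x hp.2 hq.2))
  obtain ⟨x, hxp, hxB⟩ := not_disjoint_iff.1 (h p hp)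
  exact ⟨x, hxB, hxp⟩

theorem insert_inter_biUnion_subset {x : α} {p g : Finset α} {M : Finset (Finset α)} (hxg : x ∈ g)
    (hp : Disjoint p (M.biUnion id)) : insert x p ∩ M.biUnion id ⊆ g := by
  intro y hy
  obtain ⟨hy, hyW⟩ := mem_inter.1 hy
  rcases mem_insert.1 hy with rfl | hyp
  · exact hxg
  · exact absurd hyW (disjoint_left.1 hp hyp)

namespace IsMaximumMatching

variable {H M : Finset (Finset α)}

theorem card_le_of_inter_subset (hM : IsMaximumMatching H M) {R N : Finset (Finset α)}
    (hR : R ⊆ M) (hN : IsMatching H N) (hne : ∀ f ∈ N, f.Nonempty)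
    (hNR : ∀ f ∈ N, f ∩ M.biUnion id ⊆ R.biUnion id) : N.card ≤ R.card := by
  have hfR : ∀ f ∈ N, ∀ g ∈ M, ∀ x ∈ f, x ∈ g → g ∈ R := by
    intro f hf g hg x hxf hxg
    obtain ⟨g', hg', hxg'⟩ :=
      mem_biUnion.1 (hNR f hf (mem_inter.2 ⟨hxf, mem_biUnion.2 ⟨g, hg, hxg⟩⟩))
    rwa [hM.1.2.elim_finset hg (hR hg') x hxg hxg']
  have hdisj : Disjoint (M \ R) N := disjoint_right.2 fun f hf hfM => by
    obtain ⟨x, hx⟩ := hne f hf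
    exact (mem_sdiff.1 hfM).2 (hfR f hf f (mem_sdiff.1 hfM).1 x hx hx)
  have hmatch : IsMatching H (M \ R ∪ N) := by
    refine ⟨union_subset (sdiff_subset.trans hM.1.1) hN.1, ?_⟩
    rw [coe_union]
    refine (hM.1.2.subset (coe_subset.2 sdiff_subset)).union hN.2 fun g hg f hf _ => ?_
    exact disjoint_left.2 fun x hxg hxf =>
      (mem_sdiff.1 hg).2 (hfR f hf g (mem_sdiff.1 hg).1 x hxf hxg)
  have := hM.2 _ hmatch
  rw [card_union_of_disjoint hdisj, card_sdiff_of_subset hR] at this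
  have := card_le_card hR
  omega

theorem not_disjoint_biUnion (hM : IsMaximumMatching H M) {e : Finset α} (he : e ∈ H)
    (hne : e.Nonempty) : ¬ Disjoint e (M.biUnion id) := fun hd => by
  have := hM.card_le_of_inter_subset (empty_subset M) (N := {e})
    ⟨singleton_subset_iff.2 he, by simp⟩ (by simpa using hne)
    (by simp [disjoint_iff_inter_eq_empty.1 hd])
  simp at this

end IsMaximumMatching

theorem exists_cover_of_isMatching_card_le {G : Finset (Finset α)} {r k : ℕ}
    (hG : ∀ p ∈ G, p.Nonempty ∧ p.card ≤ r) (hk : ∀ F, IsMatching G F → F.card ≤ k) :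
    ∃ C : Finset α, C.card ≤ r * k ∧ ∀ p ∈ G, ¬ Disjoint p C := by
  obtain ⟨F, hF⟩ := exists_isMaximumMatching G
  refine ⟨F.biUnion id, ?_, fun p hp => hF.not_disjoint_biUnion hp (hG p hp).1⟩
  calc (F.biUnion id).card ≤ F.card * r :=
        card_biUnion_le_card_mul _ _ _ fun p hp => (hG p (hF.1.1 hp)).2
    _ ≤ r * k := by rw [mul_comm]; exact Nat.mul_le_mul_left r (hk F hF.1)

end Matching

section ThreeUniform

variable {V : Type*} [Fintype V] [DecidableEq V] {H M : Finset (Finset V)}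

def uncoveredLink (H M : Finset (Finset V)) (w : V) : Finset (Finset V) :=
  (univ.powersetCard 2).filter fun p => Disjoint p (M.biUnion id) ∧ insert w p ∈ H

@[simp]
theorem mem_uncoveredLink {w : V} {p : Finset V} :
    p ∈ uncoveredLink H M w ↔ p.card = 2 ∧ Disjoint p (M.biUnion id) ∧ insert w p ∈ H := by
  simp [uncoveredLink]

/-- Four pairwise disjoint pairs are what is needed for one of them to avoid any three given
vertices. -/
def IsStrong (H M : Finset (Finset V)) (w : V) : Prop :=
  ∃ F, IsMatching (uncoveredLink H M w) F ∧ 4 ≤ F.card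

theorem IsStrong.exists_disjoint {w : V} (hw : IsStrong H M w) {B : Finset V}
    (hB : (B \ M.biUnion id).card ≤ 3) : ∃ p ∈ uncoveredLink H M w, Disjoint p B := by
  obtain ⟨F, hF, hF4⟩ := hw
  obtain ⟨p, hpF, hp⟩ := exists_disjoint_of_pairwiseDisjoint hF.2 (B := B \ M.biUnion id) (by omega)
  refine ⟨p, hF.1 hpF, ?_⟩
  rw [← sdiff_union_inter B (M.biUnion id)]
  exact disjoint_union_right.2
    ⟨hp, (mem_uncoveredLink.1 (hF.1 hpF)).2.1.mono_right inter_subset_right⟩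

theorem exists_cover_uncoveredLink {w : V} (hw : ¬ IsStrong H M w) :
    ∃ C : Finset V, C.card ≤ 6 ∧ ∀ p ∈ uncoveredLink H M w, ¬ Disjoint p C := by
  refine exists_cover_of_isMatching_card_le (r := 2) (k := 3) (fun p hp => ?_) fun F hF => ?_
  · have := (mem_uncoveredLink.1 hp).1
    exact ⟨card_pos.1 (by omega), this.le⟩
  · by_contra! h
    exact hw ⟨F, hF, h⟩

theorem mem_union_of_insert_mem {C : Finset V} {v w b : V}
    (hC : ∀ p ∈ uncoveredLink H M w, ¬ Disjoint p C) (hv : v ∉ M.biUnion id) (hvC : v ∉ C)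
    (hvb : v ≠ b) (he : insert v {w, b} ∈ H) : b ∈ C ∪ M.biUnion id := by
  by_contra hb
  rw [mem_union, not_or] at hb
  refine hC {v, b} (mem_uncoveredLink.2 ⟨card_pair hvb, ?_, by rwa [insert_comm]⟩) ?_
  · simp [hv, hb.2]
  · simp [hvC, hb.1]

namespace IsMaximumMatching

theorem not_inter_subset_of_isStrong (h3 : ∀ e ∈ H, e.card = 3) (hM : IsMaximumMatching H M)
    {g e : Finset V} {x : V} (hg : g ∈ M) (hxg : x ∈ g) (hx : IsStrong H M x) (he : e ∈ H)
    (hxe : x ∉ e) : ¬ e ∩ M.biUnion id ⊆ g := by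
  intro heg
  obtain ⟨p, hp, hpe⟩ :=
    hx.exists_disjoint (B := e) ((card_le_card sdiff_subset).trans (h3 e he).le)
  obtain ⟨-, hpW, hpH⟩ := mem_uncoveredLink.1 hp
  have hne : e ≠ insert x p := fun h => hxe (h ▸ mem_insert_self x p)
  have := hM.card_le_of_inter_subset (singleton_subset_iff.2 hg) (N := {e, insert x p})
    ⟨by simp [insert_subset_iff, he, hpH], by
      simp [Set.pairwiseDisjoint_insert, hne, disjoint_insert_right, hxe, hpe.symm]⟩
    (by simpa using (card_pos.1 (by rw [h3 e he]; omega) : e.Nonempty))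
    (by simp [heg, insert_inter_biUnion_subset hxg hpW])
  simp [card_pair hne] at this

theorem not_inter_subset_union_of_isStrong (h3 : ∀ e ∈ H, e.card = 3)
    (hM : IsMaximumMatching H M) {g g' e : Finset V} {x x' : V} (hg : g ∈ M) (hg' : g' ∈ M)
    (hgg' : g ≠ g') (hxg : x ∈ g) (hx'g' : x' ∈ g') (hx : IsStrong H M x)
    (hx' : IsStrong H M x') (he : e ∈ H) (hxe : x ∉ e) (hx'e : x' ∉ e)
    (heW : (e \ M.biUnion id).card ≤ 1) : ¬ e ∩ M.biUnion id ⊆ g ∪ g' := by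
  intro heg
  obtain ⟨p, hp, hpe⟩ := hx.exists_disjoint (B := e) (by omega)
  obtain ⟨hp2, hpW, hpH⟩ := mem_uncoveredLink.1 hp
  obtain ⟨p', hp', hp'e⟩ := hx'.exists_disjoint (B := e ∪ p) (by
    calc ((e ∪ p) \ M.biUnion id).card ≤ (e \ M.biUnion id ∪ p).card := by
          rw [union_sdiff_distrib]; exact card_le_card (union_subset_union_right sdiff_subset)
      _ ≤ 3 := by have := card_union_le (e \ M.biUnion id) p; omega)
  obtain ⟨-, hp'W, hp'H⟩ := mem_uncoveredLink.1 hp'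
  obtain ⟨hp'e, hp'p⟩ := disjoint_union_right.1 hp'e
  have hxW : x ∈ M.biUnion id := mem_biUnion.2 ⟨g, hg, hxg⟩
  have hx'W : x' ∈ M.biUnion id := mem_biUnion.2 ⟨g', hg', hx'g'⟩
  have hxx' : x ≠ x' := fun h => hgg' (hM.1.2.elim_finset hg hg' x hxg (h ▸ hx'g'))
  have hxp' : x ∉ p' := fun h => disjoint_left.1 hp'W h hxW
  have hx'p : x' ∉ p := fun h => disjoint_left.1 hpW h hx'W
  have hne : e ≠ insert x p := fun h => hxe (h ▸ mem_insert_self x p)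
  have hne' : e ≠ insert x' p' := fun h => hx'e (h ▸ mem_insert_self x' p')
  have hne'' : insert x p ≠ insert x' p' := fun h => hxp' <|
    (mem_insert.1 (h ▸ mem_insert_self x p)).resolve_left hxx'
  have := hM.card_le_of_inter_subset (insert_subset hg (singleton_subset_iff.2 hg'))
    (N := {e, insert x p, insert x' p'})
    ⟨by simp [insert_subset_iff, he, hpH, hp'H], by
      simp [Set.pairwiseDisjoint_insert, hne, hne', hne'', disjoint_insert_right,
        disjoint_insert_left, hxe, hx'e, hxx', hxp', hx'p, hpe.symm, hp'e.symm, hp'p.symm]⟩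
    (by simpa using (card_pos.1 (by rw [h3 e he]; omega) : e.Nonempty))
    (by simp [heg, (insert_inter_biUnion_subset hxg hpW).trans subset_union_left,
      (insert_inter_biUnion_subset hx'g' hp'W).trans subset_union_right])
  rw [card_pair hgg', card_insert_of_notMem (by simp [hne, hne']), card_pair hne''] at this
  omega

theorem mem_of_mem_biUnion_of_notMem (h3 : ∀ e ∈ H, e.card = 3) (hM : IsMaximumMatching H M)
    {X Y : Finset V} (hY : ∀ g ∈ M, ∀ y ∈ g, y ∉ Y → ∃ x ∈ g ∩ X, IsStrong H M x)
    {v a b : V} (hv : v ∉ M.biUnion id) (he : insert v {a, b} ∈ H)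
    (heX : Disjoint (insert v {a, b}) X) (ha : a ∈ M.biUnion id) (haY : a ∉ Y) : b ∈ Y := by
  by_contra hbY
  have hsub : ∀ s : Finset V, a ∈ s → (b ∈ M.biUnion id → b ∈ s) →
      insert v {a, b} ∩ M.biUnion id ⊆ s := by
    intro s has hbs y hy
    simp only [mem_inter, mem_insert, mem_singleton] at hy
    rcases hy with ⟨rfl | rfl | rfl, hyW⟩
    exacts [absurd hyW hv, has, hbs hyW]
  obtain ⟨g, hg, hag⟩ := mem_biUnion.1 ha
  obtain ⟨x, hx, hxs⟩ := hY g hg a hag haY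
  have hxe : x ∉ insert v {a, b} := disjoint_right.1 heX (mem_inter.1 hx).2
  by_cases hb : b ∈ M.biUnion id
  · obtain ⟨g', hg', hbg'⟩ := mem_biUnion.1 hb
    obtain ⟨x', hx', hx's⟩ := hY g' hg' b hbg' hbY
    by_cases hgg' : g = g'
    · subst hgg'
      exact hM.not_inter_subset_of_isStrong h3 hg (mem_inter.1 hx).1 hxs he hxe
        (hsub g hag fun _ => hbg')
    · refine hM.not_inter_subset_union_of_isStrong h3 hg hg' hgg' (mem_inter.1 hx).1
        (mem_inter.1 hx').1 hxs hx's he hxe (disjoint_right.1 heX (mem_inter.1 hx').2) ?_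
        (hsub _ (mem_union_left _ hag) fun _ => mem_union_right _ hbg')
      refine (card_le_card fun y hy => ?_).trans (card_singleton v).le
      simp only [mem_sdiff, mem_insert, mem_singleton] at hy
      rcases hy with ⟨rfl | rfl | rfl, hyW⟩
      exacts [mem_singleton_self y, absurd ha hyW, absurd hb hyW]
  · exact hM.not_inter_subset_of_isStrong h3 hg (mem_inter.1 hx).1 hxs he hxe
      (hsub g hag fun h => absurd h hb)

theorem erase_mem_biUnion (h3 : ∀ e ∈ H, e.card = 3) (hM : IsMaximumMatching H M)
    {X Y : Finset V} {C : V → Finset V}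
    (hY : ∀ g ∈ M, ∀ y ∈ g, y ∉ Y → ∃ x ∈ g ∩ X, IsStrong H M x)
    (hC : ∀ w ∈ Y, ∀ p ∈ uncoveredLink H M w, ¬ Disjoint p (C w))
    {v : V} (hv : v ∉ M.biUnion id) (hvC : ∀ w ∈ Y, v ∉ C w)
    {e : Finset V} (he : e ∈ H) (hve : v ∈ e) (heX : Disjoint e X) :
    e.erase v ∈ Y.biUnion fun w => (C w ∪ M.biUnion id).image fun q => {w, q} := by
  obtain ⟨a, b, -, hpab⟩ := card_eq_two.1 (by rw [card_erase_of_mem hve, h3 e he])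
  have hvab : v ∉ ({a, b} : Finset V) := hpab ▸ notMem_erase v e
  obtain rfl : e = insert v {a, b} := by rw [← hpab, insert_erase hve]
  rw [hpab]
  have key : ∀ a b : V, insert v {a, b} ∈ H → v ≠ b → a ∈ Y →
      ({a, b} : Finset V) ∈ Y.biUnion fun w => (C w ∪ M.biUnion id).image fun q => {w, q} := by
    intro a b he hvb ha
    exact mem_biUnion.2 ⟨a, ha, mem_image.2
      ⟨b, mem_union_of_insert_mem (hC a ha) hv (hvC a ha) hvb he, rfl⟩⟩
  have hva : v ≠ a := fun h => hvab (by simp [h])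
  have hvb : v ≠ b := fun h => hvab (by simp [h])
  have hab : a ∈ Y ∨ b ∈ Y := by
    by_contra! h
    by_cases ha : a ∈ M.biUnion id
    · exact h.2 (hM.mem_of_mem_biUnion_of_notMem h3 hY hv he heX ha h.1)
    by_cases hb : b ∈ M.biUnion id
    · rw [pair_comm] at he heX
      exact h.1 (hM.mem_of_mem_biUnion_of_notMem h3 hY hv he heX hb h.2)
    exact hM.not_disjoint_biUnion he (insert_nonempty _ _) (by simp [hv, ha, hb])
  rcases hab with ha | hb
  · exact key a b he hvb ha
  · rw [pair_comm] at he ⊢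
    exact key b a he hva hb

end IsMaximumMatching

theorem exists_strong_transversal (hM3 : ∀ g ∈ M, g.card = 3) :
    ∃ X Y : Finset V, X ⊆ M.biUnion id ∧ 3 * X.card + Y.card ≤ 3 * M.card ∧
      (∀ w ∈ Y, ¬ IsStrong H M w) ∧ ∀ g ∈ M, ∀ y ∈ g, y ∉ Y → ∃ x ∈ g ∩ X, IsStrong H M x := by
  classical
  set S := M.filter fun g => ∃ x ∈ g, IsStrong H M x
  set T := M.filter fun g => ¬ ∃ x ∈ g, IsStrong H M x
  choose r hrg hr using fun g (hg : g ∈ S) => (mem_filter.1 hg).2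
  refine ⟨S.attach.image fun g : S => r g.1 g.2, T.biUnion id, ?_, ?_, ?_, ?_⟩
  · simp only [image_subset_iff]
    exact fun g _ => mem_biUnion.2 ⟨g.1, (mem_filter.1 g.2).1, hrg g.1 g.2⟩
  · have hST : S.card + T.card = M.card := card_filter_add_card_filter_not _
    have := (card_image_le (s := S.attach) (f := fun g : S => r g.1 g.2)).trans_eq (card_attach)
    have := card_biUnion_le_card_mul T id 3 fun g hg => (hM3 g (mem_filter.1 hg).1).le
    omega
  · intro w hw hws
    obtain ⟨g, hg, hwg⟩ := mem_biUnion.1 hw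
    exact (mem_filter.1 hg).2 ⟨w, hwg, hws⟩
  · intro g hg y hyg hyT
    have hgS : g ∈ S := mem_filter.2 ⟨hg, by
      by_contra h
      exact hyT (mem_biUnion.2 ⟨g, mem_filter.2 ⟨hg, h⟩, hyg⟩)⟩
    exact ⟨r g hgS, mem_inter.2 ⟨hrg g hgS, mem_image.2 ⟨(⟨g, hgS⟩ : S), mem_attach _ _, rfl⟩⟩,
      hr g hgS⟩

theorem card_filter_mem_add_choose_le (h3 : ∀ e ∈ H, e.card = 3) {v : V} {X : Finset V}
    (hvX : v ∉ X) {Q : Finset (Finset V)} (hQ : ∀ e ∈ H, v ∈ e → Disjoint e X → e.erase v ∈ Q) :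
    (H.filter (v ∈ ·)).card + (Fintype.card V - 1 - X.card).choose 2 ≤
      (Fintype.card V - 1).choose 2 + Q.card := by
  set A := univ.erase v
  have hXA : X ⊆ A := fun x hx => mem_erase.2 ⟨fun h => hvX (h ▸ hx), mem_univ x⟩
  have hsub : (A \ X).powersetCard 2 ⊆ A.powersetCard 2 := powersetCard_mono sdiff_subset
  have hmaps : Set.MapsTo (erase · v) (H.filter (v ∈ ·) : Set (Finset V))
      ↑(A.powersetCard 2 \ (A \ X).powersetCard 2 ∪ Q) := by
    intro e he
    obtain ⟨he, hve⟩ := mem_filter.1 he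
    by_cases heX : Disjoint e X
    · exact mem_union_right _ (hQ e he hve heX)
    obtain ⟨x, hxe, hxX⟩ := not_disjoint_iff.1 heX
    have hxv : x ∈ e.erase v := mem_erase.2 ⟨fun h => hvX (h ▸ hxX), hxe⟩
    refine mem_union_left _ (mem_sdiff.2 ⟨mem_powersetCard.2 ⟨?_, ?_⟩, fun h => ?_⟩)
    · exact fun y hy => mem_erase.2 ⟨(mem_erase.1 hy).1, mem_univ y⟩
    · rw [card_erase_of_mem hve, h3 e he]
    · exact (mem_sdiff.1 ((mem_powersetCard.1 h).1 hxv)).2 hxX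
  have hinj : Set.InjOn (erase · v) (H.filter (v ∈ ·) : Set (Finset V)) := by
    intro e he f hf hef
    rw [← insert_erase (mem_filter.1 he).2, ← insert_erase (mem_filter.1 hf).2]
    exact congrArg (insert v) hef
  have := (card_le_card_of_injOn _ hmaps hinj).trans (card_union_le _ _)
  rw [card_sdiff_of_subset hsub, card_powersetCard, card_powersetCard,
    card_sdiff_of_subset hXA, card_erase_of_mem (mem_univ v), card_univ] at this
  have := card_le_card hsub
  rw [card_powersetCard, card_powersetCard, card_sdiff_of_subset hXA,
    card_erase_of_mem (mem_univ v), card_univ] at this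
  omega

end ThreeUniform

theorem choose_two_add_mul_le_of_lt {n d m x k : ℕ} (hn : 54 * (d + 1) < n) (hmd : m < d)
    (hk : 3 * x + k ≤ 3 * m) : (n - d).choose 2 + k * (6 + 3 * m) ≤ (n - 1 - x).choose 2 := by
  have hj : n - 1 - x = (n - d) + (d - 1 - x) := by omega
  refine le_trans ?_ (hj ▸ Nat.choose_two_add_mul_le (n - d) (d - 1 - x))
  have : k * (6 + 3 * m) ≤ (d - 1 - x) * (n - d) :=
    calc k * (6 + 3 * m) ≤ (3 * (d - 1 - x)) * (6 + 3 * m) := Nat.mul_le_mul_right _ (by omega)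
      _ = (d - 1 - x) * (18 + 9 * m) := by ring
      _ ≤ (d - 1 - x) * (n - d) := Nat.mul_le_mul_left _ (by omega)
  omega

theorem stmt_2 (d : ℕ) (V : Type) [Fintype V] [DecidableEq V]
    (H : Finset (Finset V)) (h3 : ∀ e ∈ H, e.card = 3)
    (hn : 54 * (d + 1) < Fintype.card V)
    (hdeg : ∀ v : V, Nat.choose (Fintype.card V - 1) 2 - Nat.choose (Fintype.card V - d) 2
      < (H.filter fun e => v ∈ e).card) :
    ∃ M ⊆ H, (M : Set (Finset V)).PairwiseDisjoint id ∧ d ≤ M.card := by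
  obtain ⟨M, hM⟩ := exists_isMaximumMatching H
  refine ⟨M, hM.1.1, hM.1.2, ?_⟩
  by_contra! hMd
  have hM3 : ∀ g ∈ M, g.card = 3 := fun g hg => h3 g (hM.1.1 hg)
  obtain ⟨X, Y, hXW, hXY, hYweak, hY⟩ := exists_strong_transversal (H := H) hM3
  choose! C hC6 hC using fun w hw => exists_cover_uncoveredLink (hYweak w hw)
  have hW := card_biUnion_le_card_mul M id 3 fun g hg => (hM3 g hg).le
  obtain ⟨v, -, hv⟩ := exists_mem_notMem_of_card_lt_card (s := M.biUnion id ∪ Y.biUnion C)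
    (t := univ) (by
      have := card_union_le (M.biUnion id) (Y.biUnion C)
      have := card_biUnion_le_card_mul Y C 6 hC6
      rw [card_univ]
      omega)
  obtain ⟨hvW, hvC⟩ := not_or.1 (mt mem_union.2 hv)
  have hdeg_le := card_filter_mem_add_choose_le h3 (fun h => hvW (hXW h))
    fun e he hve heX => hM.erase_mem_biUnion h3 hY hC hvW
      (fun w hw h => hvC (mem_biUnion.2 ⟨w, hw, h⟩)) he hve heX
  have hQ := card_biUnion_le_card_mul Y
    (fun w => (C w ∪ M.biUnion id).image fun q => ({w, q} : Finset V)) (6 + 3 * M.card) fun w hw => card_image_le.trans <| (card_union_le _ _).trans (by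
      have := hC6 w hw; omega)
  have := choose_two_add_mul_le_of_lt hn hMd hXY
  have := hdeg v
  omega
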